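/- Let H be a normal subgroup of π₁(X,x₀) and X a locally path connected strong H-SLT space at x₀. Then H is closed in the whisker topology on π₁(X,x₀) if and only if H is closed in the lasso topology on π₁(X,x₀). -/

import Mathlib

/-!
The lasso topology is coarser than the whisker topology, so only "whisker closed ⇒ lasso closed"
needs an argument. If `g ∉ H`, whisker openness of the complement of `H` gives a neighborhood `W`
of `x₀` with `π(W, x₀) g ∩ H = ∅`. Strong `H`-SLT yields an open cover `𝒰` whose Spanier group
lies in `H ⊔ π(W, x₀) = H π(W, x₀)` (`H` is normal), and the lasso neighborhood of `g` built from
`𝒰` lies in `Sp(𝒰) g`, hence misses `H`.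
-/

open CategoryTheory unitInterval
open scoped Topology

attribute [local instance] Path.Homotopic.setoid

noncomputable section

/-- The homotopy class of a loop as an element of the fundamental group. -/
def loopClass {X : Type*} [TopologicalSpace X] {x : X} (γ : Path x x) :
    FundamentalGroup X x :=
  FundamentalGroup.fromPath (⟦γ⟧ : Path.Homotopic.Quotient x x)

variable {X : Type*} [TopologicalSpace X]

/-- The Spanier group of a family of subsets of `X`, based at `x`: the subgroup generated by
classes `[α∗β∗α⁻¹]` where `α` is a path from `x` and `β` is a loop inside a member of `𝒰`. -/
def spanierGroupAt (x : X) (𝒰 : Set (Set X)) : Subgroup (FundamentalGroup X x) :=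
  Subgroup.closure {g | ∃ (y : X) (α : Path x y) (β : Path y y) (U : Set X),
    U ∈ 𝒰 ∧ (∀ t, β t ∈ U) ∧ g = loopClass (α.trans (β.trans α.symm))}

/-- `𝒰` is an open cover of `X`. -/
def IsOpenCover (𝒰 : Set (Set X)) : Prop := (∀ U ∈ 𝒰, IsOpen U) ∧ ⋃₀ 𝒰 = Set.univ

/-- `X` is a strong `H`-SLT space at `x₀`: for every `x ∈ X` and every open neighborhood `U`
of `x₀` there is an open neighborhood `V` of `x` such that for every loop `β` in `V` based at
`x` and every path `α` from `x₀` to `x` there is a loop `λ` in `U` based at `x₀` with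
`[α∗β∗α⁻¹∗λ⁻¹] ∈ H`. -/
def StrongHSLTAt (x₀ : X) (H : Subgroup (FundamentalGroup X x₀)) : Prop :=
  ∀ (x : X) (U : Set X), IsOpen U → x₀ ∈ U →
    ∃ V : Set X, IsOpen V ∧ x ∈ V ∧
      ∀ (β : Path x x), (∀ t, β t ∈ V) → ∀ (α : Path x₀ x),
        ∃ lam : Path x₀ x₀, (∀ t, lam t ∈ U) ∧
          loopClass (α.trans (β.trans α.symm)) * (loopClass lam)⁻¹ ∈ H

/-- The whisker topology on the fundamental group at `x₀`: the subspace topology inherited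
from the whisker topology on the universal path space. -/
def whiskerPi1 (x₀ : X) : TopologicalSpace (FundamentalGroup X x₀) :=
  TopologicalSpace.generateFrom
    {S | ∃ (x : X) (α : Path x₀ x) (U : Set X), IsOpen U ∧ x ∈ U ∧
      S = {g | ∃ lam : Path x x₀, (∀ t, lam t ∈ U) ∧ g = loopClass (α.trans lam)}}

/-- The lasso topology on the fundamental group at `x₀`: the subspace topology inherited
from the lasso topology on the universal path space. -/
def lassoPi1 (x₀ : X) : TopologicalSpace (FundamentalGroup X x₀) :=
  TopologicalSpace.generateFrom
    {S | ∃ (x : X) (α : Path x₀ x) (𝒰 : Set (Set X)) (U : Set X),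
      IsOpenCover 𝒰 ∧ U ∈ 𝒰 ∧ x ∈ U ∧
      S = {g | ∃ (γ : Path x x) (δ : Path x x₀), loopClass γ ∈ spanierGroupAt x 𝒰 ∧
            (∀ t, δ t ∈ U) ∧ g = loopClass ((α.trans γ).trans δ)}}

namespace Path

variable {x y z : X} {U : Set X}

lemma trans_apply_mem {p : Path x y} {q : Path y z} (hp : ∀ t, p t ∈ U) (hq : ∀ t, q t ∈ U)
    (t : I) : p.trans q t ∈ U := by
  rw [← Set.range_subset_iff] at hp hq
  exact (trans_range p q ▸ Set.union_subset hp hq) (Set.mem_range_self t)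

lemma symm_apply_mem {p : Path x y} (hp : ∀ t, p t ∈ U) (t : I) : p.symm t ∈ U :=
  hp _

end Path

namespace Path.Homotopic.Quotient

@[simp]
lemma symm_trans_cancel_left {x y z : X} (γ : Path.Homotopic.Quotient x y)
    (δ : Path.Homotopic.Quotient y z) : γ.symm.trans (γ.trans δ) = δ := by
  rw [← trans_assoc, symm_trans, refl_trans]

end Path.Homotopic.Quotient

section loopClass

variable {x y z : X}

lemma loopClass_mul (p q : Path x x) : loopClass p * loopClass q = loopClass (q.trans p) := rfl

lemma loopClass_refl : loopClass (Path.refl x) = 1 := rfl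

lemma loopClass_surjective : Function.Surjective (loopClass : Path x x → FundamentalGroup X x) :=
  Path.Homotopic.Quotient.mk_surjective

lemma loopClass_eq_loopClass_iff {γ δ : Path x x} :
    loopClass γ = loopClass δ ↔ Path.Homotopic.Quotient.mk γ = Path.Homotopic.Quotient.mk δ :=
  Iff.rfl

lemma loopClass_trans_trans (p : Path x y) (q : Path y z) (r : Path z x) :
    loopClass ((p.trans q).trans r) = loopClass (p.trans (q.trans r)) := by
  simp [loopClass_eq_loopClass_iff]

lemma loopClass_conj_trans_symm (α : Path x z) (p : Path y z) (β : Path z z) :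
    loopClass ((α.trans p.symm).trans ((p.trans (β.trans p.symm)).trans (α.trans p.symm).symm)) =
      loopClass (α.trans (β.trans α.symm)) := by
  simp [loopClass_eq_loopClass_iff]

lemma loopClass_refl_conj (β : Path x x) :
    loopClass ((Path.refl x).trans (β.trans (Path.refl x).symm)) = loopClass β := by
  simp [loopClass_eq_loopClass_iff]

end loopClass

/-- The image of `π₁(W, x) → π₁(X, x)`. -/
def loopClassesIn (x : X) (W : Set X) (hx : x ∈ W) : Subgroup (FundamentalGroup X x) where
  carrier := {g | ∃ γ : Path x x, (∀ t, γ t ∈ W) ∧ loopClass γ = g}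
  mul_mem' := by
    rintro _ _ ⟨γ, hγ, rfl⟩ ⟨δ, hδ, rfl⟩
    exact ⟨δ.trans γ, Path.trans_apply_mem hδ hγ, rfl⟩
  one_mem' := ⟨Path.refl x, fun _ => hx, rfl⟩
  inv_mem' := by
    rintro _ ⟨γ, hγ, rfl⟩
    exact ⟨γ.symm, Path.symm_apply_mem hγ, rfl⟩

lemma loopClass_mem_spanierGroupAt {x : X} {𝒰 : Set (Set X)} {U : Set X} (hU : U ∈ 𝒰)
    {β : Path x x} (hβ : ∀ t, β t ∈ U) : loopClass β ∈ spanierGroupAt x 𝒰 :=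
  Subgroup.subset_closure ⟨x, Path.refl x, β, U, hU, hβ, (loopClass_refl_conj β).symm⟩

lemma isOpenCover_range_pathComponentIn [LocallyPathConnectedSpace X] {V : X → Set X}
    (hVo : ∀ y, IsOpen (V y)) (hV : ∀ y, y ∈ V y) :
    IsOpenCover (Set.range fun y => pathComponentIn (V y) y) := by
  refine ⟨?_, Set.eq_univ_of_forall fun y => ⟨_, ⟨y, rfl⟩, mem_pathComponentIn_self (hV y)⟩⟩
  rintro _ ⟨y, rfl⟩
  exact (hVo y).pathComponentIn y

lemma whiskerPi1_le_lassoPi1 (x₀ : X) : whiskerPi1 x₀ ≤ lassoPi1 x₀ := by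
  refine le_generateFrom ?_
  rintro _ ⟨x, α, 𝒰, U, h𝒰, hU, hxU, rfl⟩
  refine (@isOpen_iff_forall_mem_open _ (whiskerPi1 x₀) _).2 ?_
  rintro _ ⟨γ, δ, hγ, hδ, rfl⟩
  refine ⟨_, ?_, TopologicalSpace.isOpen_generateFrom_of_mem
    ⟨x, α.trans γ, U, h𝒰.1 U hU, hxU, rfl⟩, δ, hδ, rfl⟩
  rintro _ ⟨lam, hlam, rfl⟩
  exact ⟨γ, lam, hγ, hlam, rfl⟩

lemma exists_loopClassesIn_mul_mem_of_isOpen_whiskerPi1 {x₀ : X}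
    {S : Set (FundamentalGroup X x₀)} (hS : IsOpen[whiskerPi1 x₀] S) {g : FundamentalGroup X x₀}
    (hg : g ∈ S) :
    ∃ (W : Set X) (_ : IsOpen W) (hx₀ : x₀ ∈ W), ∀ k ∈ loopClassesIn x₀ W hx₀, k * g ∈ S := by
  induction hS generalizing g with
  | basic B hB =>
    obtain ⟨x, α, U, hUo, -, rfl⟩ := hB
    obtain ⟨lam, hlam, rfl⟩ := hg
    refine ⟨U, hUo, by simpa using hlam 1, ?_⟩
    rintro _ ⟨μ, hμ, rfl⟩
    exact ⟨lam.trans μ, Path.trans_apply_mem hlam hμ, loopClass_trans_trans α lam μ⟩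
  | univ => exact ⟨Set.univ, isOpen_univ, trivial, fun _ _ => trivial⟩
  | inter S₁ S₂ _ _ ih₁ ih₂ =>
    obtain ⟨W₁, hW₁, hx₁, h₁⟩ := ih₁ hg.1
    obtain ⟨W₂, hW₂, hx₂, h₂⟩ := ih₂ hg.2
    refine ⟨W₁ ∩ W₂, hW₁.inter hW₂, ⟨hx₁, hx₂⟩, ?_⟩
    rintro _ ⟨μ, hμ, rfl⟩
    exact ⟨h₁ _ ⟨μ, fun t => (hμ t).1, rfl⟩, h₂ _ ⟨μ, fun t => (hμ t).2, rfl⟩⟩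
  | sUnion 𝒮 _ ih =>
    obtain ⟨T, hT, hgT⟩ := hg
    obtain ⟨W, hW, hx₀, h⟩ := ih T hT hgT
    exact ⟨W, hW, hx₀, fun k hk => ⟨T, hT, h k hk⟩⟩

lemma exists_isOpen_lassoPi1_mul_inv_mem_spanierGroupAt {x₀ : X} {𝒰 : Set (Set X)}
    (h𝒰 : IsOpenCover 𝒰) (g : FundamentalGroup X x₀) :
    ∃ S, IsOpen[lassoPi1 x₀] S ∧ g ∈ S ∧ ∀ b ∈ S, b * g⁻¹ ∈ spanierGroupAt x₀ 𝒰 := by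
  obtain ⟨U, hU, hx₀U⟩ := Set.mem_sUnion.1 (h𝒰.2.symm ▸ Set.mem_univ x₀)
  obtain ⟨γg, rfl⟩ := loopClass_surjective g
  refine ⟨_, TopologicalSpace.isOpen_generateFrom_of_mem
    ⟨x₀, γg, 𝒰, U, h𝒰, hU, hx₀U, rfl⟩, ?_, ?_⟩
  · refine ⟨Path.refl x₀, Path.refl x₀, loopClass_refl (x := x₀) ▸ one_mem _, fun _ => hx₀U, ?_⟩
    simp [loopClass_eq_loopClass_iff]
  · rintro _ ⟨γ, δ, hγ, hδ, rfl⟩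
    rw [← loopClass_mul, ← loopClass_mul, ← mul_assoc, mul_inv_cancel_right]
    exact mul_mem (loopClass_mem_spanierGroupAt hU hδ) hγ

/-- The cover consists of the path components of the SLT neighborhoods: a loop in such a component,
conjugated to its center `y`, is a loop in the SLT neighborhood of `y`, hence agrees with a loop in
`W` modulo `H`. -/
lemma StrongHSLTAt.exists_isOpenCover_spanierGroupAt_le [LocallyPathConnectedSpace X] {x₀ : X}
    {H : Subgroup (FundamentalGroup X x₀)} (hSLT : StrongHSLTAt x₀ H) {W : Set X}
    (hW : IsOpen W) (hx₀ : x₀ ∈ W) :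
    ∃ 𝒰, IsOpenCover 𝒰 ∧ spanierGroupAt x₀ 𝒰 ≤ H ⊔ loopClassesIn x₀ W hx₀ := by
  choose V hVo hV hVW using fun y => hSLT y W hW hx₀
  refine ⟨_, isOpenCover_range_pathComponentIn hVo hV, Subgroup.closure_le _ |>.2 ?_⟩
  rintro _ ⟨z, α, β, _, ⟨y, rfl⟩, hβ, rfl⟩
  obtain ⟨p, hp⟩ : z ∈ pathComponentIn (V y) y := by simpa using hβ 0
  have hβV : ∀ t, β t ∈ V y := fun t => pathComponentIn_subset (hβ t)
  obtain ⟨lam, hlam, hH⟩ := hVW y (p.trans (β.trans p.symm))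
    (Path.trans_apply_mem hp (Path.trans_apply_mem hβV (Path.symm_apply_mem hp))) (α.trans p.symm)
  rw [loopClass_conj_trans_symm] at hH
  rw [← inv_mul_cancel_right (loopClass (α.trans (β.trans α.symm))) (loopClass lam)]
  exact Subgroup.mul_mem_sup hH ⟨lam, hlam, rfl⟩

theorem whisker_closed_iff_lasso_closed [LocallyPathConnectedSpace X]
    (x₀ : X) (H : Subgroup (FundamentalGroup X x₀)) (hN : H.Normal)
    (hSLT : StrongHSLTAt x₀ H) :
    IsClosed[whiskerPi1 x₀] (H : Set (FundamentalGroup X x₀)) ↔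
      IsClosed[lassoPi1 x₀] (H : Set (FundamentalGroup X x₀)) := by
  refine ⟨fun hwhisker => ?_, fun hlasso => hlasso.mono (whiskerPi1_le_lassoPi1 x₀)⟩
  rw [← @isOpen_compl_iff] at hwhisker ⊢
  refine (@isOpen_iff_forall_mem_open _ (lassoPi1 x₀) _).2 fun g hg => ?_
  obtain ⟨W, hWo, hx₀, hWg⟩ := exists_loopClassesIn_mul_mem_of_isOpen_whiskerPi1 hwhisker hg
  obtain ⟨𝒰, h𝒰, hle⟩ := hSLT.exists_isOpenCover_spanierGroupAt_le hWo hx₀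
  obtain ⟨S, hSo, hgS, hS⟩ := exists_isOpen_lassoPi1_mul_inv_mem_spanierGroupAt h𝒰 g
  refine ⟨S, fun b hb hbH => ?_, hSo, hgS⟩
  obtain ⟨h, hh, k, hk, hhk⟩ := Subgroup.mem_sup_of_normal_left.1 (hle (hS b hb))
  have hkg : k * g = h⁻¹ * b := by
    rw [eq_inv_mul_iff_mul_eq, ← mul_assoc, hhk, inv_mul_cancel_right]
  exact hWg k hk (hkg ▸ H.mul_mem (H.inv_mem hh) hbH)

end
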